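/- Correctness of the stopping condition for the top-k generator: fix 1 ≤ i ≤ n and k ≥ 1, and suppose T ⊆ {1,…,i} is a set of k tuple indices such that tkp_k(t) ≥ Σ_{j=0}^{k−1} r_{i,j} for every t ∈ T. Then for every t ∈ T and every unseen index s with i < s ≤ n, tkp_k(t) ≥ tkp_k(s); consequently no tuple among {t_{i+1},…,t_n} can have a strictly larger top-k probability than any member of T, and T is a valid answer to the Global Top-k query provided its members have the k highest top-k probabilities among {t_1,…,t_i}. -/

import Mathlib

open Finset
open scoped Classical

/-- Poisson-binomial probability of exactly `j` successes among independent
events indexed by `A`, with success probabilities `q`. -/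
noncomputable def PB {α : Type*} [DecidableEq α] (A : Finset α) (q : α → ℝ) (j : ℕ) : ℝ :=
  ∑ T ∈ A.powersetCard j, (∏ a ∈ T, q a) * ∏ a ∈ A \ T, (1 - q a)

/-- Probability of a possible world `S` of the full x-Relation. -/
noncomputable def worldProb {n m : ℕ} (g : Fin n → Fin m) (p : Fin n → ℝ)
    (S : Finset (Fin n)) : ℝ :=
  (∏ t ∈ S, p t) *
    ∏ a ∈ Finset.univ.filter (fun a : Fin m => ∀ t ∈ S, g t ≠ a),
      (1 - ∑ t ∈ Finset.univ.filter (fun t : Fin n => g t = a), p t)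

/-- `rho g p i a` = existence probability of x-tuple `a` projected to the reduced
relation on the top `i` tuples (`i` is a 1-based count, tuples are 0-based). -/
noncomputable def rho {n m : ℕ} (g : Fin n → Fin m) (p : Fin n → ℝ) (i : ℕ) (a : Fin m) : ℝ :=
  ∑ t ∈ Finset.univ.filter (fun t : Fin n => (t : ℕ) < i ∧ g t = a), p t

/-- Probability of a possible world `S` of the reduced relation on the top `i` tuples. -/
noncomputable def worldProbI {n m : ℕ} (g : Fin n → Fin m) (p : Fin n → ℝ) (i : ℕ)
    (S : Finset (Fin n)) : ℝ :=
  (∏ t ∈ S, p t) *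
    ∏ a ∈ Finset.univ.filter (fun a : Fin m => ∀ t ∈ S, g t ≠ a), (1 - rho g p i a)

/-- `pij g p i j` = probability that tuple `i` is ranked at the `j`-th position
(`j ≥ 1`) across all possible worlds: the sum of `worldProb` over possible worlds
containing `i` together with exactly `j - 1` higher-score tuples. -/
noncomputable def pij {n m : ℕ} (g : Fin n → Fin m) (p : Fin n → ℝ) (i : Fin n) (j : ℕ) : ℝ :=
  ∑ S ∈ Finset.univ.filter (fun S : Finset (Fin n) =>
      Set.InjOn g ↑S ∧ i ∈ S ∧ (S.filter (fun t => (t : ℕ) < (i : ℕ))).card = j - 1),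
    worldProb g p S

/-- `tkp g p k i` = top-`k` probability of tuple `i`. -/
noncomputable def tkp {n m : ℕ} (g : Fin n → Fin m) (p : Fin n → ℝ) (k : ℕ) (i : Fin n) : ℝ :=
  ∑ j ∈ Finset.Icc 1 k, pij g p i j

/-!
An unseen tuple `s` (index `≥ i`) can only be among the top `k` of a world that contains fewer
than `k` of the first `i` tuples, so `tkp_k(s)` is at most the probability of that event. A world
picks at most one tuple from each x-tuple, independently across x-tuples, so the number of the
first `i` tuples it contains has generating function
`∑_S Pr(S) X ^ #(S ∩ [0, i)) = ∏_a (ρ_i(a) X + 1 - ρ_i(a))`, whose coefficients are the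
Poisson-binomial probabilities `r_{i,j}`. Hence `tkp_k(s) ≤ ∑_{j<k} r_{i,j} ≤ tkp_k(t)` for `t ∈ T`.
-/
open Polynomial

section Fiberwise

variable {ι κ : Type*} [Fintype ι] [DecidableEq ι] [DecidableEq κ]

def fiberSubsingletons (f : ι → κ) (a : κ) : Finset (Finset ι) :=
  insert ∅ (({t | f t = a} : Finset ι).image singleton)

theorem apply_eq_of_mem_fiberSubsingletons {f : ι → κ} {a : κ} {B : Finset ι}
    (hB : B ∈ fiberSubsingletons f a) {t : ι} (ht : t ∈ B) : f t = a := by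
  rcases mem_insert.1 hB with rfl | hB
  · simp at ht
  · obtain ⟨u, hu, rfl⟩ := mem_image.1 hB
    rw [mem_singleton.1 ht]
    exact (mem_filter.1 hu).2

theorem injOn_iff_forall_fiber_mem (f : ι → κ) (S : Finset ι) :
    Set.InjOn f S ↔ ∀ a, {t ∈ S | f t = a} ∈ fiberSubsingletons f a := by
  simp only [fiberSubsingletons, mem_insert, mem_image, mem_filter, mem_univ, true_and,
    Set.InjOn, mem_coe]
  constructor
  · intro hinj a
    rcases eq_empty_or_nonempty {t ∈ S | f t = a} with h | ⟨t, ht⟩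
    · exact Or.inl h
    · rw [mem_filter] at ht
      refine Or.inr ⟨t, ht.2, ?_⟩
      ext u
      simp only [mem_singleton, mem_filter]
      constructor
      · rintro rfl; exact ht
      · rintro ⟨hu, hua⟩; exact hinj hu ht.1 (hua.trans ht.2.symm)
  · intro hfib x hx y hy hxy
    have hx' : x ∈ {t ∈ S | f t = f y} := mem_filter.2 ⟨hx, hxy⟩
    have hy' : y ∈ {t ∈ S | f t = f y} := mem_filter.2 ⟨hy, rfl⟩
    rcases hfib (f y) with h | ⟨t, -, h⟩
    · simp [h] at hy'
    · rw [← h, mem_singleton] at hx' hy'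
      exact hx'.trans hy'.symm

/-- A finset is the same thing as the family of its fibres `{t ∈ S | f t = a}`, and these can be
chosen independently of each other. -/
theorem sum_prod_fiberwise_eq_prod_sum [Fintype κ] {R : Type*} [CommSemiring R] (f : ι → κ)
    (C : κ → Finset (Finset ι)) (hC : ∀ a, ∀ B ∈ C a, ∀ t ∈ B, f t = a)
    (F : κ → Finset ι → R) :
    ∑ S ∈ univ.filter (fun S : Finset ι => ∀ a, {t ∈ S | f t = a} ∈ C a),
        ∏ a, F a {t ∈ S | f t = a} =
      ∏ a, ∑ B ∈ C a, F a B := by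
  have fiber_glue : ∀ φ ∈ Fintype.piFinset C, ∀ a,
      ({t | t ∈ φ (f t) ∧ f t = a} : Finset ι) = φ a := by
    intro φ hφ a
    ext t
    simp only [mem_filter, mem_univ, true_and]
    refine ⟨fun ⟨ht, hta⟩ => hta ▸ ht, fun ht => ?_⟩
    rw [hC a _ (Fintype.mem_piFinset.1 hφ a) t ht]
    exact ⟨ht, rfl⟩
  rw [prod_univ_sum]
  symm
  refine sum_nbij' (fun φ => ({t | t ∈ φ (f t)} : Finset ι)) (fun S a => {t ∈ S | f t = a})
    ?_ ?_ ?_ ?_ ?_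
  · intro φ hφ
    simpa [filter_filter, fiber_glue φ hφ] using Fintype.mem_piFinset.1 hφ
  · intro S hS
    simpa using hS
  · intro φ hφ
    funext a
    simpa [filter_filter] using fiber_glue φ hφ a
  · intro S _
    ext t
    simp
  · intro φ hφ
    simp only [filter_filter, fiber_glue φ hφ]

end Fiberwise

theorem coeff_prod_eq_PB {α : Type*} [DecidableEq α] (A : Finset α) (q : α → ℝ) (j : ℕ) :
    (∏ a ∈ A, (C (q a) * X + C (1 - q a))).coeff j = PB A q j := by
  rw [prod_add, finsetSum_coeff, PB, powersetCard_eq_filter, sum_filter]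
  refine sum_congr rfl fun T _ => ?_
  rw [prod_mul_distrib, ← map_prod, prod_const, ← map_prod, mul_right_comm, ← map_mul,
    coeff_C_mul_X_pow]
  exact if_congr eq_comm rfl rfl

section World

variable {n m : ℕ} (g : Fin n → Fin m) (p : Fin n → ℝ)

noncomputable def fiberWeight (a : Fin m) (B : Finset (Fin n)) : ℝ :=
  (∏ t ∈ B, p t) * if B = ∅ then 1 - ∑ t with g t = a, p t else 1

theorem worldProb_eq_prod_fiberWeight (S : Finset (Fin n)) :
    worldProb g p S = ∏ a, fiberWeight g p a {t ∈ S | g t = a} := by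
  simp only [fiberWeight, prod_mul_distrib, prod_fiberwise, ← prod_filter, filter_eq_empty_iff]
  rfl

theorem worldProb_nonneg (hp : ∀ t, 0 ≤ p t) (hsum : ∀ a, ∑ t with g t = a, p t ≤ 1)
    (S : Finset (Fin n)) : 0 ≤ worldProb g p S :=
  mul_nonneg (prod_nonneg fun t _ => hp t) (prod_nonneg fun a _ => sub_nonneg.2 (hsum a))

theorem sum_fiberSubsingletons_fiberWeight_mul_X_pow (i : ℕ) (a : Fin m) :
    ∑ B ∈ fiberSubsingletons g a,
        C (fiberWeight g p a B) * X ^ #{t ∈ B | t.val < i} =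
      C (rho g p i a) * X + C (1 - rho g p i a) := by
  rw [fiberSubsingletons, sum_insert (by simp), sum_image singleton_injective.injOn]
  have seen_term : ∀ t : Fin n, C (p t) * X ^ #(if t.val < i then {t} else ∅) =
      if t.val < i then C (p t) * X else C (p t) := by
    intro t
    split_ifs <;> simp
  have rho_eq : C (rho g p i a) = ∑ t ∈ {t | g t = a} with t.val < i, C (p t) := by
    simp only [rho, map_sum, filter_filter, and_comm]
  simp only [fiberWeight, filter_singleton, prod_singleton, prod_empty, if_true, one_mul,
    singleton_ne_empty, if_false, mul_one, map_sub, map_one, map_sum, pow_zero, card_empty,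
    filter_empty, seen_term]
  rw [sum_ite, ← sum_mul, rho_eq,
    ← sum_filter_add_sum_filter_not {t | g t = a} (fun t => t.val < i)]
  ring

theorem sum_injOn_worldProb_mul_X_pow (i : ℕ) :
    ∑ S ∈ univ.filter (fun S : Finset (Fin n) => Set.InjOn g ↑S),
        C (worldProb g p S) * X ^ #{t ∈ S | t.val < i} =
      ∏ a, (C (rho g p i a) * X + C (1 - rho g p i a)) := by
  have factor : ∀ S : Finset (Fin n), C (worldProb g p S) * X ^ #{t ∈ S | t.val < i} =
      ∏ a, C (fiberWeight g p a {t ∈ S | g t = a}) *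
        X ^ #{t ∈ {t ∈ S | g t = a} | t.val < i} := by
    intro S
    rw [prod_mul_distrib, prod_pow_eq_pow_sum, ← map_prod, worldProb_eq_prod_fiberWeight,
      card_eq_sum_card_fiberwise (f := g) (t := univ) (fun _ _ => mem_univ _)]
    simp only [filter_filter, and_comm]
  calc _ = ∑ S ∈ univ.filter
          (fun S : Finset (Fin n) => ∀ a, {t ∈ S | g t = a} ∈ fiberSubsingletons g a),
        ∏ a, C (fiberWeight g p a {t ∈ S | g t = a}) *
          X ^ #{t ∈ {t ∈ S | g t = a} | t.val < i} :=
      sum_congr (filter_congr fun S _ => injOn_iff_forall_fiber_mem g S) fun S _ => factor S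
    _ = ∏ a, ∑ B ∈ fiberSubsingletons g a,
          C (fiberWeight g p a B) * X ^ #{t ∈ B | t.val < i} := by
      convert sum_prod_fiberwise_eq_prod_sum g _
        (fun _ _ hB _ => apply_eq_of_mem_fiberSubsingletons hB)
        fun a B => C (fiberWeight g p a B) * X ^ #{t ∈ B | t.val < i}
    _ = _ := prod_congr rfl fun a _ => sum_fiberSubsingletons_fiberWeight_mul_X_pow g p i a

theorem sum_injOn_worldProb_card_eq_PB (i j : ℕ) :
    ∑ S ∈ univ.filter
        (fun S : Finset (Fin n) => Set.InjOn g ↑S ∧ #{t ∈ S | t.val < i} = j),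
      worldProb g p S = PB univ (rho g p i) j := by
  rw [← coeff_prod_eq_PB, ← sum_injOn_worldProb_mul_X_pow, finsetSum_coeff]
  simp only [coeff_C_mul_X_pow]
  rw [← sum_filter, filter_filter]
  simp only [eq_comm]

theorem sum_injOn_worldProb_card_lt_eq_sum_PB (i k : ℕ) :
    ∑ S ∈ univ.filter
        (fun S : Finset (Fin n) => Set.InjOn g ↑S ∧ #{t ∈ S | t.val < i} < k),
      worldProb g p S = ∑ j ∈ range k, PB univ (rho g p i) j := by
  rw [← sum_fiberwise_of_maps_to (g := fun S => #{t ∈ S | t.val < i}) (t := range k)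
    fun S hS => mem_range.2 (mem_filter.1 hS).2.2]
  refine sum_congr rfl fun j hj => ?_
  rw [← sum_injOn_worldProb_card_eq_PB, filter_filter]
  refine sum_congr (filter_congr fun S _ => ?_) fun _ _ => rfl
  constructor
  · rintro ⟨⟨hinj, -⟩, rfl⟩
    exact ⟨hinj, rfl⟩
  · rintro ⟨hinj, rfl⟩
    exact ⟨⟨hinj, mem_range.1 hj⟩, rfl⟩

-- `pij` counts the predecessors of a tuple through the `Finset` monad, whose `image` uses
-- classical decidable equality on `ℕ`; hence the instance argument.
theorem card_image_val [DecidableEq ℕ] (B : Finset (Fin n)) : #(B.image Fin.val) = #B :=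
  card_image_of_injective _ Fin.val_injective

theorem tkp_eq_sum_worldProb (k : ℕ) (s : Fin n) :
    tkp g p k s = ∑ S ∈ univ.filter (fun S : Finset (Fin n) =>
      Set.InjOn g ↑S ∧ s ∈ S ∧ #{t ∈ S | t.val < s.val} < k), worldProb g p S := by
  rw [tkp, ← sum_fiberwise_of_maps_to (g := fun S => #{t ∈ S | t.val < s.val} + 1)
    (t := Icc 1 k) fun S hS => mem_Icc.2 ⟨Nat.le_add_left 1 _, (mem_filter.1 hS).2.2.2⟩]
  refine sum_congr rfl fun j hj => ?_
  obtain ⟨hj1, hjk⟩ := mem_Icc.1 hj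
  rw [pij, filter_filter]
  refine sum_congr (filter_congr fun S _ => ?_) fun _ _ => rfl
  simp only [pure_def, bind_def, sup_singleton_apply, filter_image, card_image_val]
  constructor
  · rintro ⟨hinj, hs, hcard⟩
    exact ⟨⟨hinj, hs, by omega⟩, by omega⟩
  · rintro ⟨⟨hinj, hs, -⟩, hcard⟩
    exact ⟨hinj, hs, by omega⟩

theorem tkp_le_sum_PB_of_le (hp : ∀ t, 0 ≤ p t) (hsum : ∀ a, ∑ t with g t = a, p t ≤ 1)
    {i : ℕ} (k : ℕ) {s : Fin n} (hs : i ≤ s) :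
    tkp g p k s ≤ ∑ j ∈ range k, PB univ (rho g p i) j := by
  rw [tkp_eq_sum_worldProb, ← sum_injOn_worldProb_card_lt_eq_sum_PB]
  refine sum_le_sum_of_subset_of_nonneg (fun S hS => ?_)
    fun S _ _ => worldProb_nonneg g p hp hsum S
  simp only [mem_filter, mem_univ, true_and] at hS ⊢
  obtain ⟨hinj, -, hcard⟩ := hS
  refine ⟨hinj, lt_of_le_of_lt (card_le_card (monotone_filter_right S fun t _ ht => ?_)) hcard⟩
  omega

end World

theorem stopping_condition_correct_general (n m : ℕ) (g : Fin n → Fin m) (p : Fin n → ℝ)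
    (hp : ∀ t, 0 ≤ p t)
    (hsum : ∀ a : Fin m, ∑ t ∈ Finset.univ.filter (fun t : Fin n => g t = a), p t ≤ 1)
    (i : ℕ) (k : ℕ)
    (T : Finset (Fin n))
    (hTbound : ∀ t ∈ T, ∑ j ∈ Finset.range k, PB Finset.univ (rho g p i) j ≤ tkp g p k t) :
    (∀ t ∈ T, ∀ s : Fin n, i ≤ (s : ℕ) → tkp g p k s ≤ tkp g p k t) ∧
    ((∀ t ∈ T, ∀ s : Fin n, (s : ℕ) < i → s ∉ T → tkp g p k s ≤ tkp g p k t) →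
      ∀ t ∈ T, ∀ s : Fin n, s ∉ T → tkp g p k s ≤ tkp g p k t) := by
  have unseen : ∀ t ∈ T, ∀ s : Fin n, i ≤ (s : ℕ) → tkp g p k s ≤ tkp g p k t :=
    fun t ht s hs => (tkp_le_sum_PB_of_le g p hp hsum k hs).trans (hTbound t ht)
  refine ⟨unseen, fun seen t ht s hsT => ?_⟩
  rcases lt_or_ge (s : ℕ) i with h | h
  · exact seen t ht s h hsT
  · exact unseen t ht s h

/-- Correctness of the stopping condition of the top-`k` generator: if every member
of a set `T` of `k` seen tuples (indices `< i`, i.e. among the top `i` tuples) has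
top-`k` probability at least the upper bound `Σ_{j<k} r_{i,j}`, then no unseen tuple
(1-based index `> i`) can beat any member of `T`; consequently, if the members of `T`
moreover have the `k` highest top-`k` probabilities among the seen tuples, then `T`
is a valid Global Top-`k` answer (its members have the highest top-`k` probabilities
overall). -/
theorem stopping_condition_correct (n m : ℕ) (g : Fin n → Fin m) (p : Fin n → ℝ)
    (hp : ∀ t, 0 ≤ p t)
    (hsum : ∀ a : Fin m, ∑ t ∈ Finset.univ.filter (fun t : Fin n => g t = a), p t ≤ 1)
    (i : ℕ) (hi1 : 1 ≤ i) (hi : i ≤ n) (k : ℕ) (hk : 1 ≤ k)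
    (T : Finset (Fin n)) (hTseen : ∀ t ∈ T, (t : ℕ) < i) (hTcard : T.card = k)
    (hTbound : ∀ t ∈ T, ∑ j ∈ Finset.range k, PB Finset.univ (rho g p i) j ≤ tkp g p k t) :
    (∀ t ∈ T, ∀ s : Fin n, i ≤ (s : ℕ) → tkp g p k s ≤ tkp g p k t) ∧
    ((∀ t ∈ T, ∀ s : Fin n, (s : ℕ) < i → s ∉ T → tkp g p k s ≤ tkp g p k t) →
      ∀ t ∈ T, ∀ s : Fin n, s ∉ T → tkp g p k s ≤ tkp g p k t) :=
  stopping_condition_correct_general n m g p hp hsum i k T hTbound
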